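/- Let h be a multisegment and n a nonempty multisegment admissible to h, and let a be the smallest integer with n[a] ≠ ∅. If there exist a segment Δ in n[a] and a segment Δ̄ in n[a+1] such that Δ̄ ⊄ Δ and Δ̄ ⊆ Υ(Δ,h), then (n,h) is locally minimizable. -/

import Mathlib

noncomputable section
open Classical

/-- A segment `[a,b]`: a pair of integers with `a ≤ b`, identified with the
integer interval `{a, a+1, …, b}`. -/
def Seg : Type := {p : ℤ × ℤ // p.1 ≤ p.2}

/-- Constructor for segments. -/
def Seg.mk (a b : ℤ) (hab : a ≤ b) : Seg := Subtype.mk (a, b) hab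

instance : DecidableEq Seg := inferInstanceAs (DecidableEq {p : ℤ × ℤ // p.1 ≤ p.2})

instance : Inhabited Seg := ⟨Seg.mk 0 0 le_rfl⟩

/-- The lexicographic ordering `≼ᴸ` on segments: `[a,b] ≤ [a',b']` iff `a < a'`,
or `a = a'` and `b ≤ b'`. -/
instance : LinearOrder Seg :=
  LinearOrder.lift' (fun Δ => toLex (Subtype.val Δ))
    (fun _ _ hh => Subtype.ext (toLex.injective hh))

/-- `a(Δ)`, the left endpoint. -/
def segA (Δ : Seg) : ℤ := (Subtype.val Δ).1

/-- `b(Δ)`, the right endpoint. -/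
def segB (Δ : Seg) : ℤ := (Subtype.val Δ).2

/-- `[a,b]` as a multiset of segments: a singleton if `a ≤ b`, empty otherwise
("empty segments are discarded"). -/
def mkSeg? (a b : ℤ) : Multiset Seg := if h : a ≤ b then {Seg.mk a b h} else 0

/-- `⁻Δ = [a+1,b]`, as a multiset (the empty segment being discarded). -/
def negSeg (Δ : Seg) : Multiset Seg := mkSeg? (segA Δ + 1) (segB Δ)

/-- `⁻m` for a multisegment `m`. -/
def negM (m : Multiset Seg) : Multiset Seg := m.bind negSeg

/-- `m[c]`: the submultiset of segments of `m` starting at `c`. -/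
def atc (m : Multiset Seg) (c : ℤ) : Multiset Seg := m.filter (fun Δ => segA Δ = c)

/-- `Δ ⊆ Δ'` as intervals. -/
def Subseg (Δ Δ' : Seg) : Prop := segA Δ' ≤ segA Δ ∧ segB Δ ≤ segB Δ'

/-- Two segments are linked: their union is an interval and neither contains
the other. -/
def Linked (Δ Δ' : Seg) : Prop :=
  segA Δ ≤ segB Δ' + 1 ∧ segA Δ' ≤ segB Δ + 1 ∧ ¬ Subseg Δ Δ' ∧ ¬ Subseg Δ' Δ

/-- `Δ = [a,b]` is admissible to `h`: `h` contains a segment `[a,c]` with `c ≥ b`. -/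
def SegAdmissible (Δ : Seg) (h : Multiset Seg) : Prop :=
  ∃ D ∈ h, segA D = segA Δ ∧ segB Δ ≤ segB D

/-- The tail of the removal sequence: recursively pick the `≺ᴸ`-minimal segment
`[aᵢ,bᵢ]` of `h` with `a_{i-1} < aᵢ` and `b ≤ bᵢ < b_{i-1}`. -/
def removalTail (h : Multiset Seg) (b : ℤ) : ℕ → ℤ → ℤ → List Seg
  | 0, _, _ => []
  | fuel + 1, aprev, bprev =>
    if hx : ∃ D, (D ∈ h ∧ aprev < segA D ∧ b ≤ segB D ∧ segB D < bprev) ∧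
        ∀ D', (D' ∈ h ∧ aprev < segA D' ∧ b ≤ segB D' ∧ segB D' < bprev) → D ≤ D' then
      Classical.choose hx ::
        removalTail h b fuel (segA (Classical.choose hx)) (segB (Classical.choose hx))
    else []

/-- The removal sequence for `(Δ, h)`: `Δ₁` is a shortest segment `[a,c]` of `h`
with `c ≥ b`, followed by the recursively chosen segments. (Empty if `Δ` is not
admissible to `h`.) -/
def removalSeq (Δ : Seg) (h : Multiset Seg) : List Seg :=
  if hx : ∃ D, (D ∈ h ∧ segA D = segA Δ ∧ segB Δ ≤ segB D) ∧
      ∀ D', (D' ∈ h ∧ segA D' = segA Δ ∧ segB Δ ≤ segB D') → segB D ≤ segB D' then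
    Classical.choose hx ::
      removalTail h (segB Δ) (segB (Classical.choose hx) - segB Δ).toNat
        (segA (Classical.choose hx)) (segB (Classical.choose hx))
  else []

/-- `Υ(Δ,h)`: the first segment of the removal sequence for `(Δ,h)`. -/
def Upsilon (Δ : Seg) (h : Multiset Seg) : Seg := (removalSeq Δ h).headD default

/-- The truncations `Δ₁ᵗʳ, …, Δᵣᵗʳ` of a removal sequence:
`Δᵢᵗʳ = [a_{i+1}, bᵢ]` for `i < r` and `Δᵣᵗʳ = [b+1, bᵣ]` (possibly empty). -/
def truncList (b : ℤ) : List Seg → Multiset Seg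
  | [] => 0
  | [D] => mkSeg? (b + 1) (segB D)
  | D :: D' :: rest => mkSeg? (segA D') (segB D) + truncList b (D' :: rest)

/-- `r(Δ,h) = h − Δ₁ − … − Δᵣ + Δ₁ᵗʳ + … + Δᵣᵗʳ`, with `none` playing the role
of the infinity multisegment `∞`. -/
def segRemove (Δ : Seg) (h : Multiset Seg) : Option (Multiset Seg) :=
  if SegAdmissible Δ h then
    some (h - (removalSeq Δ h : Multiset Seg) + truncList (segB Δ) (removalSeq Δ h))
  else none

/-- Iterated removal along a list of segments (also `r(Δ,∞) = ∞`). -/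
def rList : List Seg → Option (Multiset Seg) → Option (Multiset Seg)
  | [], o => o
  | Δ :: rest, o => rList rest (o.bind (fun x => segRemove Δ x))

/-- `r(m,h)` for a multisegment `m`: apply the removals along the segments of
`m` listed in an ascending (here: `≺ᴸ`-sorted) order. -/
def rM (m h : Multiset Seg) : Option (Multiset Seg) :=
  rList (m.sort (· ≤ ·)) (some h)

/-- The smallest integer `a` with `n[a] ≠ ∅` (junk value `0` for `n = ∅`). -/
def minStart (n : Multiset Seg) : ℤ := ((n.map segA).sort (· ≤ ·)).headD 0

/-- `Υ(Δ₁,r₀), Υ(Δ₂,r₁), …` computed sequentially along a list of segments. -/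
def fsList : List Seg → Multiset Seg → Multiset Seg
  | [], _ => 0
  | Δ :: rest, h =>
    Upsilon Δ h ::ₘ
      (match segRemove Δ h with
        | some h' => fsList rest h'
        | none => 0)

/-- `fs(n,h)`: with `a` the smallest integer such that `n[a] ≠ ∅` and
`n[a] = {Δ₁, …, Δₖ}`, this is `{Υ(Δ₁,r₀), …, Υ(Δₖ,r_{k-1})}` if `n[a]` is
admissible to `h`, and `∅` otherwise (also `fs(∅,h) = ∅`). -/
def fs (n h : Multiset Seg) : Multiset Seg :=
  if n = 0 then 0
  else if rM (atc n (minStart n)) h ≠ none then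
    fsList ((atc n (minStart n)).sort (· ≤ ·)) h
  else 0

/-- `trr(n,h) = h − fs(n,h) + ⁻(fs(n,h))`. -/
def trr (n h : Multiset Seg) : Multiset Seg := h - fs n h + negM (fs n h)

/-- `trd(n,h) = n − n[a] + ⁻(n[a])` where `a` is the smallest integer with
`n[a] ≠ ∅` (and `trd(∅,h) = ∅`). -/
def trd (n h : Multiset Seg) : Multiset Seg :=
  if n = 0 then 0 else n - atc n (minStart n) + negM (atc n (minStart n))

/-- The pairs `(nᵢ, hᵢ)` of the fine chain: `n₀ = n`, `h₀ = h`,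
`nᵢ = trd(n_{i-1}, h_{i-1})`, `hᵢ = trr(n_{i-1}, h_{i-1})`. -/
def fcPair (n h : Multiset Seg) : ℕ → Multiset Seg × Multiset Seg
  | 0 => (n, h)
  | i + 1 => (trd (fcPair n h i).1 (fcPair n h i).2, trr (fcPair n h i).1 (fcPair n h i).2)

/-- The fine chain `fc_h(n)`: the sequence `fs(n₀,h₀), fs(n₁,h₁), …`. -/
def fc (h n : Multiset Seg) (i : ℕ) : Multiset Seg := fs (fcPair n h i).1 (fcPair n h i).2

/-- `n` is obtained from `m` by an elementary intersection-union operation: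
`n = m − Δ − Δ' + (Δ ∪ Δ') + (Δ ∩ Δ')` for a pair of linked segments `Δ, Δ'`
of `m` (intersection omitted if empty). -/
def elemIU (m n : Multiset Seg) : Prop :=
  ∃ Δ Δ', Δ ∈ m ∧ Δ' ∈ m.erase Δ ∧ Linked Δ Δ' ∧
    n = (m.erase Δ).erase Δ'
        + mkSeg? (min (segA Δ) (segA Δ')) (max (segB Δ) (segB Δ'))
        + mkSeg? (max (segA Δ) (segA Δ')) (min (segB Δ) (segB Δ'))

/-- The Zelevinsky ordering: `n ≤_Z m` iff `n = m` or `n` is obtained from `m`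
by a finite sequence of elementary intersection-union operations. -/
def leZ (n m : Multiset Seg) : Prop := Relation.ReflTransGen elemIU m n

/-- The cuspidal support of a multisegment: the multiset union of its segments,
as a multiset of integers. -/
def csupp (m : Multiset Seg) : Multiset ℤ :=
  m.bind (fun Δ => (Finset.Icc (segA Δ) (segB Δ)).val)

/-- The `b`-values of a multisegment, sorted in descending order. -/
def bDesc (m : Multiset Seg) : List ℤ := ((m.map segB).sort (· ≤ ·)).reverse

/-- `m₁ ≤ᵃ_c m₂` for multisegments at a point `c`: with segments labelled
`Δ_{1,k} ≤ᵃ_c … ≤ᵃ_c Δ_{1,1}` and `Δ_{2,r} ≤ᵃ_c … ≤ᵃ_c Δ_{2,1}`, require `k ≤ r`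
and `Δ_{1,i} ≤ᵃ_c Δ_{2,i}` for all `i ≤ k`. -/
def leA (m₁ m₂ : Multiset Seg) : Prop :=
  (bDesc m₁).length ≤ (bDesc m₂).length ∧
    ∀ i < (bDesc m₁).length, (bDesc m₁).getD i 0 ≤ (bDesc m₂).getD i 0

/-- `m₁ <ᵃ_c m₂`. -/
def ltA (m₁ m₂ : Multiset Seg) : Prop := leA m₁ m₂ ∧ m₁ ≠ m₂

/-- The fine chain ordering `n <^{fc} n'` (with respect to `h`). -/
def ltFC (h n n' : Multiset Seg) : Prop :=
  ∃ i, (∀ j < i, fc h n j = fc h n' j) ∧ ltA (fc h n i) (fc h n' i)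

/-- `n ≤^{fc} n'`: either `n <^{fc} n'` or the two fine chains are equal. -/
def leFC (h n n' : Multiset Seg) : Prop := ltFC h n n' ∨ ∀ i, fc h n i = fc h n' i

/-- Local minimizability of `(n,h)`: with `a` the smallest integer such that
`n[a] ≠ ∅`, there is a segment `Δ̄` in `n[a+1]` with
`|{Δ ∈ n[a] : Δ̄ ⊆ Δ}| < |{Δ ∈ fs(n,h) : Δ̄ ⊆ Δ}|`. -/
def locallyMin (n h : Multiset Seg) : Prop :=
  ∃ Δb ∈ atc n (minStart n + 1),
    ((atc n (minStart n)).filter (fun Δ => Subseg Δb Δ)).card <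
      ((fs n h).filter (fun Δ => Subseg Δb Δ)).card

/-- The shortest segment of the removal sequence for `(Δ,h)` whose interval
contains `x` (by the nesting property, the last such one in the sequence). -/
def shortestCont (Δ : Seg) (h : Multiset Seg) (x : ℤ) : Seg :=
  (((removalSeq Δ h).filter (fun D => decide (segA D ≤ x ∧ x ≤ segB D))).getLast?).getD default

/-- The non-overlapping property for `(Δ, Δ', h)`: for the shortest segment `Δ̄`
in the removal sequence for `(Δ,h)` containing `a(Δ') − 1`, one has `Δ' ⊄ Δ̄`. -/
def NonOverlap (Δ Δ' : Seg) (h : Multiset Seg) : Prop :=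
  ¬ Subseg Δ' (shortestCont Δ h (segA Δ' - 1))

/-- `ε_Δ(h) = |{Δ̃ ∈ h[a(Δ)] : Δ ⊆ Δ̃}|`, counted with multiplicity. -/
def epsilonSeg (Δ : Seg) (h : Multiset Seg) : ℕ :=
  ((atc h (segA Δ)).filter (fun D => Subseg Δ D)).card

/-- `η_{Δ'}(h) = η_{Δ'}(h')`: componentwise equality of
`(ε_{[a',b']}, ε_{[a'+1,b']}, …, ε_{[b',b']})`. -/
def etaEq (Δ' : Seg) (h h' : Multiset Seg) : Prop :=
  ∀ c, segA Δ' ≤ c → ∀ hc : c ≤ segB Δ',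
    epsilonSeg (Seg.mk c (segB Δ') hc) h = epsilonSeg (Seg.mk c (segB Δ') hc) h'

/-- The intermediate segment property for `(Δ, Δ', h)`. -/
def IntermediateSeg (Δ Δ' : Seg) (h : Multiset Seg) : Prop :=
  ∃ D ∈ h, segA Δ ≤ segA D ∧ segA D < segA Δ' ∧ segB Δ ≤ segB D ∧ segB D < segB Δ'

/-- Helper to build segments from literals. -/
def sg (a b : ℤ) (hab : a ≤ b := by decide) : Seg := Seg.mk a b hab

/-
Processing the segments of `n[a]` one after the other, each `Δᵢ` is replaced by `Υ(Δᵢ, rᵢ₋₁)`,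
which starts at `a` and is at least as long as `Δᵢ`; so every segment of `n[a]` containing `Δ̄`
yields a segment of `fs(n,h)` containing `Δ̄`. The removals never create segments starting at
`a`, so `Υ(Δ, rᵢ₋₁)` is a segment of `h` admissible for `Δ`, hence at least as long as the
shortest one, `Υ(Δ, h) ⊇ Δ̄`. Thus `Δ` itself, which does not contain `Δ̄`, contributes an
extra segment containing `Δ̄` to `fs(n,h)`.
-/

lemma seg_le_iff (D E : Seg) :
    D ≤ E ↔ segA D < segA E ∨ (segA D = segA E ∧ segB D ≤ segB E) := by
  show toLex D.val ≤ toLex E.val ↔ _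
  rw [Prod.Lex.le_iff]
  rfl

lemma segA_le_segB (D : Seg) : segA D ≤ segB D := D.2

lemma segA_of_mem_mkSeg? {E : Seg} {x y : ℤ} (hE : E ∈ mkSeg? x y) : segA E = x := by
  unfold mkSeg? at hE
  split at hE
  · rw [Multiset.mem_singleton.1 hE]; rfl
  · simp at hE

lemma mem_atc {n : Multiset Seg} {D : Seg} {a : ℤ} : D ∈ atc n a ↔ D ∈ n ∧ segA D = a :=
  Multiset.mem_filter

lemma SegAdmissible.exists_min_segB {Δ : Seg} {h : Multiset Seg} (hadm : SegAdmissible Δ h) :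
    ∃ D, (D ∈ h ∧ segA D = segA Δ ∧ segB Δ ≤ segB D) ∧
      ∀ D', (D' ∈ h ∧ segA D' = segA Δ ∧ segB Δ ≤ segB D') → segB D ≤ segB D' := by
  set s := (h.filter fun D => segA D = segA Δ ∧ segB Δ ≤ segB D).toFinset
  obtain ⟨D₀, hD₀, hD₀a, hD₀b⟩ := hadm
  obtain ⟨D, hDs, hDmin⟩ := s.exists_min_image segB
    ⟨D₀, Multiset.mem_toFinset.2 (Multiset.mem_filter.2 ⟨hD₀, hD₀a, hD₀b⟩)⟩
  exact ⟨D, Multiset.mem_filter.1 (Multiset.mem_toFinset.1 hDs),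
    fun D' hD' => hDmin D' (Multiset.mem_toFinset.2 (Multiset.mem_filter.2 hD'))⟩

lemma SegAdmissible.upsilon_spec {Δ : Seg} {h : Multiset Seg} (hadm : SegAdmissible Δ h) :
    Upsilon Δ h ∈ h ∧ segA (Upsilon Δ h) = segA Δ ∧ segB Δ ≤ segB (Upsilon Δ h) ∧
      ∀ D ∈ h, segA D = segA Δ → segB Δ ≤ segB D → segB (Upsilon Δ h) ≤ segB D := by
  have hx := hadm.exists_min_segB
  have hU : Upsilon Δ h = Classical.choose hx := by
    unfold Upsilon removalSeq
    rw [dif_pos hx]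
    rfl
  obtain ⟨⟨hmem, ha, hb⟩, hmin⟩ := Classical.choose_spec hx
  rw [hU]
  exact ⟨hmem, ha, hb, fun D hD hDa hDb => hmin D ⟨hD, hDa, hDb⟩⟩

lemma subseg_upsilon_of_subseg {Δ Δb : Seg} {h : Multiset Seg} (hadm : SegAdmissible Δ h)
    (hsub : Subseg Δb Δ) : Subseg Δb (Upsilon Δ h) := by
  obtain ⟨-, ha, hb, -⟩ := hadm.upsilon_spec
  exact ⟨ha ▸ hsub.1, hsub.2.trans hb⟩

lemma subseg_upsilon_of_subseg_upsilon {Δ Δb : Seg} {h h' : Multiset Seg}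
    (hadm : SegAdmissible Δ h') (hh' : ∀ E ∈ h', segA E = segA Δ → E ∈ h)
    (hsub : Subseg Δb (Upsilon Δ h)) : Subseg Δb (Upsilon Δ h') := by
  obtain ⟨hmem', ha', hb', -⟩ := hadm.upsilon_spec
  have hmem := hh' _ hmem' ha'
  obtain ⟨-, ha, -, hmin⟩ := SegAdmissible.upsilon_spec ⟨_, hmem, ha', hb'⟩
  exact ⟨ha' ▸ ha ▸ hsub.1, hsub.2.trans (hmin _ hmem ha' hb')⟩

lemma lt_segA_of_mem_removalTail {h : Multiset Seg} {b : ℤ} :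
    ∀ (fuel : ℕ) (aprev bprev : ℤ), ∀ D ∈ removalTail h b fuel aprev bprev, aprev < segA D
  | 0, _, _, D, hD => by simp [removalTail] at hD
  | fuel + 1, aprev, bprev, D, hD => by
    unfold removalTail at hD
    split at hD
    · rename_i hx
      have hlt := (Classical.choose_spec hx).1.2.1
      rcases List.mem_cons.1 hD with rfl | hD
      · exact hlt
      · exact hlt.trans (lt_segA_of_mem_removalTail fuel _ _ D hD)
    · simp at hD

lemma lt_segA_of_mem_removalSeq_tail {Δ D : Seg} {h : Multiset Seg} (hadm : SegAdmissible Δ h)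
    (hD : D ∈ (removalSeq Δ h).tail) : segA Δ < segA D := by
  have hx := hadm.exists_min_segB
  unfold removalSeq at hD
  rw [dif_pos hx] at hD
  exact (Classical.choose_spec hx).1.2.1 ▸ lt_segA_of_mem_removalTail _ _ _ D hD

lemma segA_of_mem_truncList {b : ℤ} :
    ∀ {L : List Seg} {E : Seg}, E ∈ truncList b L → segA E = b + 1 ∨ ∃ D ∈ L.tail, segA E = segA D
  | [], _, hE => by simp [truncList] at hE
  | [_], _, hE => Or.inl (segA_of_mem_mkSeg? hE)
  | _ :: D' :: rest, E, hE => by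
    rcases Multiset.mem_add.1 hE with hE | hE
    · exact Or.inr ⟨D', List.mem_cons_self, segA_of_mem_mkSeg? hE⟩
    · rcases segA_of_mem_truncList hE with hb | ⟨D, hD, hDa⟩
      · exact Or.inl hb
      · exact Or.inr ⟨D, List.mem_cons_of_mem _ hD, hDa⟩

lemma segAdmissible_of_segRemove_eq_some {Δ : Seg} {h h' : Multiset Seg}
    (hr : segRemove Δ h = some h') : SegAdmissible Δ h := by
  by_contra hadm
  simp [segRemove, hadm] at hr

/-- Removal only creates segments starting strictly after `a(Δ)`. -/
lemma mem_of_segRemove_eq_some {Δ E : Seg} {h h' : Multiset Seg}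
    (hr : segRemove Δ h = some h') (hE : E ∈ h') (hEa : segA E ≤ segA Δ) : E ∈ h := by
  have hadm := segAdmissible_of_segRemove_eq_some hr
  rw [segRemove, if_pos hadm, Option.some_inj] at hr
  subst hr
  rcases Multiset.mem_add.1 hE with hE | hE
  · exact Multiset.mem_of_le (Multiset.sub_le_self _ _) hE
  · exfalso
    rcases segA_of_mem_truncList hE with hb | ⟨D, hD, hDa⟩
    · have := segA_le_segB Δ
      omega
    · have := lt_segA_of_mem_removalSeq_tail hadm hD
      omega

lemma rList_none (L : List Seg) : rList L none = none := by
  induction L with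
  | nil => rfl
  | cons _ _ ih => exact ih

lemma rList_cons_some (D : Seg) (L : List Seg) (h : Multiset Seg) :
    rList (D :: L) (some h) = rList L (segRemove D h) := rfl

lemma rList_append (L₁ L₂ : List Seg) (o : Option (Multiset Seg)) :
    rList (L₁ ++ L₂) o = rList L₂ (rList L₁ o) := by
  induction L₁ generalizing o with
  | nil => rfl
  | cons _ _ ih => exact ih _

lemma exists_segRemove_of_rList_cons_ne_none {D : Seg} {L : List Seg} {h : Multiset Seg}
    (hne : rList (D :: L) (some h) ≠ none) :
    ∃ h', segRemove D h = some h' ∧ rList L (some h') ≠ none := by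
  rw [rList_cons_some] at hne
  cases hr : segRemove D h with
  | none => rw [hr, rList_none] at hne; exact absurd rfl hne
  | some h' => exact ⟨h', rfl, hr ▸ hne⟩

lemma minStart_le_segA {n : Multiset Seg} {D : Seg} (hD : D ∈ n) : minStart n ≤ segA D := by
  have hmem : segA D ∈ (n.map segA).sort (· ≤ ·) :=
    (Multiset.mem_sort _).2 (Multiset.mem_map_of_mem _ hD)
  have hsorted := Multiset.pairwise_sort (n.map segA) (· ≤ ·)
  unfold minStart
  cases hl : (n.map segA).sort (· ≤ ·) with
  | nil => simp [hl] at hmem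
  | cons x l =>
    rw [hl] at hmem hsorted
    rcases List.mem_cons.1 hmem with hx | hx
    · exact hx.ge
    · exact List.rel_of_pairwise_cons hsorted hx

lemma sort_eq_sort_atc_append {n : Multiset Seg} {a : ℤ} (hmin : ∀ D ∈ n, a ≤ segA D) :
    n.sort (· ≤ ·) =
      (atc n a).sort (· ≤ ·) ++ (n.filter fun D => segA D ≠ a).sort (· ≤ ·) := by
  have hperm : ((atc n a).sort (· ≤ ·) ++ (n.filter fun D => segA D ≠ a).sort (· ≤ ·)).Perm
      (n.sort (· ≤ ·)) := by
    rw [← Multiset.coe_eq_coe, ← Multiset.coe_add, Multiset.sort_eq, Multiset.sort_eq,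
      Multiset.sort_eq]
    exact Multiset.filter_add_not _ n
  refine (List.Perm.eq_of_pairwise' ?_ (Multiset.pairwise_sort _ _) hperm).symm
  refine List.pairwise_append.2 ⟨Multiset.pairwise_sort _ _, Multiset.pairwise_sort _ _, ?_⟩
  intro x hx y hy
  rw [Multiset.mem_sort, mem_atc] at hx
  rw [Multiset.mem_sort, Multiset.mem_filter] at hy
  exact (seg_le_iff x y).2 (Or.inl (hx.2 ▸ lt_of_le_of_ne (hmin y hy.1) (Ne.symm hy.2)))

lemma rM_atc_minStart_ne_none {n h : Multiset Seg} (hadm : rM n h ≠ none) :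
    rM (atc n (minStart n)) h ≠ none := by
  intro hnone
  apply hadm
  rw [rM] at hnone
  rw [rM, sort_eq_sort_atc_append fun D hD => minStart_le_segA hD, rList_append, hnone,
    rList_none]

lemma fs_eq_fsList {n h : Multiset Seg} (hn : n ≠ 0) (hadm : rM n h ≠ none) :
    fs n h = fsList ((atc n (minStart n)).sort (· ≤ ·)) h := by
  rw [fs, if_neg hn, if_pos (rM_atc_minStart_ne_none hadm)]

lemma fsList_cons_of_segRemove_eq_some {D : Seg} {L : List Seg} {h h' : Multiset Seg}
    (hr : segRemove D h = some h') : fsList (D :: L) h = Upsilon D h ::ₘ fsList L h' := by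
  rw [fsList, hr]

lemma countP_le_countP_fsList (Δb : Seg) :
    ∀ (L : List Seg) (h : Multiset Seg), rList L (some h) ≠ none →
      (L : Multiset Seg).countP (Subseg Δb) ≤ (fsList L h).countP (Subseg Δb)
  | [], _, _ => by simp [fsList]
  | D :: L, h, hne => by
    obtain ⟨h', hr, hne'⟩ := exists_segRemove_of_rList_cons_ne_none hne
    rw [fsList_cons_of_segRemove_eq_some hr, ← Multiset.cons_coe, Multiset.countP_cons,
      Multiset.countP_cons]
    refine add_le_add (countP_le_countP_fsList Δb L h' hne') ?_
    have hadm := segAdmissible_of_segRemove_eq_some hr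
    split_ifs with hD hU
    exacts [le_rfl, absurd (subseg_upsilon_of_subseg hadm hD) hU, zero_le_one, le_rfl]

lemma countP_lt_countP_fsList {Δ Δb : Seg} {h : Multiset Seg} (h1 : ¬ Subseg Δb Δ)
    (h2 : Subseg Δb (Upsilon Δ h)) :
    ∀ (L : List Seg) (h' : Multiset Seg), Δ ∈ L → (∀ D ∈ L, segA D = segA Δ) →
      rList L (some h') ≠ none → (∀ E ∈ h', segA E = segA Δ → E ∈ h) →
      (L : Multiset Seg).countP (Subseg Δb) < (fsList L h').countP (Subseg Δb)
  | D :: L, h', hΔ, hLa, hne, hh' => by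
    obtain ⟨h'', hr, hne'⟩ := exists_segRemove_of_rList_cons_ne_none hne
    have hadm := segAdmissible_of_segRemove_eq_some hr
    rw [fsList_cons_of_segRemove_eq_some hr, ← Multiset.cons_coe, Multiset.countP_cons,
      Multiset.countP_cons]
    by_cases hDΔ : D = Δ
    · subst hDΔ
      rw [if_neg h1, if_pos (subseg_upsilon_of_subseg_upsilon hadm hh' h2)]
      exact Nat.lt_succ_of_le (countP_le_countP_fsList Δb L h'' hne')
    · have hh'' : ∀ E ∈ h'', segA E = segA Δ → E ∈ h := fun E hE hEa =>
        hh' E (mem_of_segRemove_eq_some hr hE (hEa.trans (hLa D List.mem_cons_self).symm).le) hEa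
      have hlt := countP_lt_countP_fsList h1 h2 L h'' ((List.mem_cons.1 hΔ).resolve_left
        (Ne.symm hDΔ)) (fun D hD => hLa D (List.mem_cons_of_mem _ hD)) hne' hh''
      refine add_lt_add_of_lt_of_le hlt ?_
      split_ifs with hD hU
      exacts [le_rfl, absurd (subseg_upsilon_of_subseg hadm hD) hU, zero_le_one, le_rfl]

/-- a one-segment criterion for local minimizability. -/
theorem statement10 (n h : Multiset Seg) (hn : n ≠ 0) (hadm : rM n h ≠ none)
    (Δ Δb : Seg) (hΔ : Δ ∈ atc n (minStart n)) (hΔb : Δb ∈ atc n (minStart n + 1))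
    (h1 : ¬ Subseg Δb Δ) (h2 : Subseg Δb (Upsilon Δ h)) :
    locallyMin n h := by
  have hLa : ∀ D ∈ (atc n (minStart n)).sort (· ≤ ·), segA D = segA Δ := fun D hD =>
    ((mem_atc.1 ((Multiset.mem_sort _).1 hD)).2).trans (mem_atc.1 hΔ).2.symm
  have hcount := countP_lt_countP_fsList h1 h2 _ h ((Multiset.mem_sort _).2 hΔ) hLa
    (rM_atc_minStart_ne_none hadm) fun E hE _ => hE
  refine ⟨Δb, hΔb, ?_⟩
  rw [fs_eq_fsList hn hadm, ← Multiset.countP_eq_card_filter, ← Multiset.countP_eq_card_filter]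
  rwa [Multiset.sort_eq] at hcount
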